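/- arXiv:2506.19462 — 3 statements merged into one kernel-verified Lean document; each statement's English description precedes it below -/
import Mathlib

section
/- Let V be a real Hilbert space, M a finite-dimensional real inner product space, a : V × V → ℝ a bounded coercive symmetric bilinear form, and b : V × M → ℝ a bounded bilinear form satisfying the inf–sup condition: there exists γ > 0 with sup_{v ∈ V, v≠0} b(v,μ)/‖v‖ ≥ γ‖μ‖ for all μ ∈ M. Then for every pair of bounded linear functionals f on V and g on M, there exists a unique pair (ψ, λ) ∈ V × M with a(ψ,v) + b(v,λ) = f(v) for all v ∈ V and b(ψ,μ) = g(μ) for all μ ∈ M. -/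
open scoped RealInnerProductSpace

set_option maxHeartbeats 1000000

/-- Well-posedness of the abstract saddle point problem: `V` a real Hilbert space,
`M` a finite-dimensional real inner product space, `a` a bounded coercive symmetric
bilinear form on `V`, `b` a bounded bilinear form on `V × M` satisfying the inf–sup
condition with constant `γ > 0`. Then for all bounded linear functionals `f` on `V`
and `g` on `M` there is a unique solution pair `(ψ, λ)`. -/
theorem stmt_2 {V M : Type*} [NormedAddCommGroup V] [InnerProductSpace ℝ V] [CompleteSpace V]
    [NormedAddCommGroup M] [InnerProductSpace ℝ M] [FiniteDimensional ℝ M]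
    (a : V →ₗ[ℝ] V →ₗ[ℝ] ℝ) (β : ℝ) (habdd : ∀ u v : V, |a u v| ≤ β * ‖u‖ * ‖v‖)
    (hasymm : ∀ u v : V, a u v = a v u)
    (α : ℝ) (hα : 0 < α) (hacoer : ∀ v : V, α * ‖v‖ ^ 2 ≤ a v v)
    (b : V →ₗ[ℝ] M →ₗ[ℝ] ℝ) (Cb : ℝ) (hbbdd : ∀ (v : V) (μ : M), |b v μ| ≤ Cb * ‖v‖ * ‖μ‖)
    (γ : ℝ) (hγ : 0 < γ)
    (hinfsup : ∀ μ : M, γ * ‖μ‖ ≤ sSup {r : ℝ | ∃ v : V, v ≠ 0 ∧ r = b v μ / ‖v‖})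
    (f : V →L[ℝ] ℝ) (g : M →L[ℝ] ℝ) :
    ∃! p : V × M, (∀ v : V, a p.1 v + b v p.2 = f v) ∧ (∀ μ : M, b p.1 μ = g μ) := by
  -- continuous versions of the bilinear forms
  have habdd' : ∀ u v : V, ‖a u v‖ ≤ max β 0 * ‖u‖ * ‖v‖ := by
    intro u v
    refine (habdd u v).trans ?_
    gcongr <;> first | exact le_max_left β 0 | positivity
  have hbbdd' : ∀ (v : V) (μ : M), ‖b v μ‖ ≤ max Cb 0 * ‖v‖ * ‖μ‖ := by
    intro v μ
    refine (hbbdd v μ).trans ?_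
    gcongr <;> first | exact le_max_left Cb 0 | positivity
  -- the Lax–Milgram operator A with ⟪A u, v⟫ = a u v
  obtain ⟨A, hA⟩ : ∃ A : V ≃L[ℝ] V, ∀ u v : V, ⟪A u, v⟫ = a u v := by
    have aC : V →L[ℝ] V →L[ℝ] ℝ := LinearMap.mkContinuous₂ a (max β 0) habdd'
    have hcoer : IsCoercive (LinearMap.mkContinuous₂ a (max β 0) habdd') := by
      refine ⟨α, hα, fun u => ?_⟩
      have h := hacoer u
      have : (LinearMap.mkContinuous₂ a (max β 0) habdd') u u = a u u := rfl
      rw [this]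
      nlinarith [sq_nonneg ‖u‖]
    exact ⟨hcoer.continuousLinearEquivOfBilin,
      fun u v => hcoer.continuousLinearEquivOfBilin_apply u v⟩
  -- the operator T : M → V with ⟪v, T μ⟫ = b v μ
  obtain ⟨T, hT⟩ : ∃ T : M →L[ℝ] V, ∀ (v : V) (μ : M), ⟪v, T μ⟫ = b v μ := by
    have hsmul : ∀ (r : ℝ) (φ : V →L[ℝ] ℝ),
        (InnerProductSpace.toDual ℝ V).symm (r • φ) =
          r • (InnerProductSpace.toDual ℝ V).symm φ := by
      intro r φ
      simp
    set bC : V →L[ℝ] M →L[ℝ] ℝ := LinearMap.mkContinuous₂ b (max Cb 0) hbbdd' with hbCdef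
    set T0 : M →ₗ[ℝ] V :=
      { toFun := fun μ => (InnerProductSpace.toDual ℝ V).symm (bC.flip μ)
        map_add' := by intro x y; simp only [map_add]
        map_smul' := by intro r x; simp only [map_smul, RingHom.id_apply] } with hT0def
    have hT0bdd : ∀ μ : M, ‖T0 μ‖ ≤ ‖bC.flip‖ * ‖μ‖ := by
      intro μ
      rw [hT0def]
      simp only [LinearMap.coe_mk, AddHom.coe_mk]
      rw [LinearIsometryEquiv.norm_map]
      exact ContinuousLinearMap.le_opNorm _ _
    refine ⟨T0.mkContinuous ‖bC.flip‖ hT0bdd, fun v μ => ?_⟩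
    rw [real_inner_comm]
    show ⟪(InnerProductSpace.toDual ℝ V).symm (bC.flip μ), v⟫ = b v μ
    exact InnerProductSpace.toDual_symm_apply
  -- the adjoint of T
  obtain ⟨Ts, hTs⟩ : ∃ Ts : V →L[ℝ] M, ∀ (v : V) (μ : M), ⟪Ts v, μ⟫ = ⟪v, T μ⟫ :=
    ⟨ContinuousLinearMap.adjoint T,
      fun v μ => ContinuousLinearMap.adjoint_inner_left T μ v⟩
  have hTs' : ∀ (v : V) (μ : M), ⟪Ts v, μ⟫ = b v μ := fun v μ => by
    rw [hTs, hT]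
  -- inf-sup gives a lower bound on ‖T μ‖
  have hTlow : ∀ μ : M, γ * ‖μ‖ ≤ ‖T μ‖ := by
    intro μ
    refine (hinfsup μ).trans (Real.sSup_le ?_ (norm_nonneg _))
    rintro r ⟨v, hv, rfl⟩
    rw [div_le_iff₀ (norm_pos_iff.mpr hv)]
    calc b v μ = ⟪v, T μ⟫ := (hT v μ).symm
      _ ≤ ‖v‖ * ‖T μ‖ := real_inner_le_norm v (T μ)
      _ = ‖T μ‖ * ‖v‖ := mul_comm _ _
  have hTzero : ∀ μ : M, T μ = 0 → μ = 0 := by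
    intro μ hμ
    have h := hTlow μ
    rw [hμ, norm_zero] at h
    have h2 : ‖μ‖ ≤ 0 := by nlinarith [norm_nonneg μ]
    simpa using le_antisymm h2 (norm_nonneg μ)
  have key : ∀ w : V, α * ‖w‖ ^ 2 ≤ 0 → w = 0 := by
    intro w hw
    have h2 : ‖w‖ ^ 2 = 0 := by
      rcases mul_nonpos_iff.mp hw with ⟨h1, h2⟩ | ⟨h1, h2⟩
      · exact le_antisymm h2 (sq_nonneg _)
      · linarith
    have h3 : ‖w‖ = 0 := by
      simpa using (pow_eq_zero_iff (two_ne_zero)).mp h2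
    simpa using h3
  -- positivity of A⁻¹
  have hAinv : ∀ w : V, α * ‖A.symm w‖ ^ 2 ≤ ⟪w, A.symm w⟫ := by
    intro w
    have h1 : ⟪A (A.symm w), A.symm w⟫ = a (A.symm w) (A.symm w) := hA _ _
    rw [A.apply_symm_apply] at h1
    rw [h1]
    exact hacoer _
  -- the Schur complement operator S
  set S : M →L[ℝ] M := Ts ∘L ((A.symm : V →L[ℝ] V) ∘L T) with hSdef
  have hSapp : ∀ μ : M, S μ = Ts (A.symm (T μ)) := fun μ => rfl
  have hSinj : Function.Injective (S : M →ₗ[ℝ] M) := by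
    rw [← LinearMap.ker_eq_bot, LinearMap.ker_eq_bot']
    intro μ hμ
    have hμ' : S μ = 0 := hμ
    have h0 : ⟪S μ, μ⟫ = 0 := by rw [hμ']; simp
    rw [hSapp, hTs, real_inner_comm] at h0
    have h1 := hAinv (T μ)
    rw [h0] at h1
    have h2 : A.symm (T μ) = 0 := key _ h1
    have h3 : T μ = 0 := by
      have := congrArg A h2
      rwa [A.apply_symm_apply, map_zero] at this
    exact hTzero μ h3
  have hSsurj : Function.Surjective (S : M →ₗ[ℝ] M) :=
    LinearMap.injective_iff_surjective.mp hSinj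
  -- Riesz representatives
  obtain ⟨F, hF⟩ : ∃ F : V, ∀ v : V, ⟪F, v⟫ = f v :=
    ⟨(InnerProductSpace.toDual ℝ V).symm f, fun v => InnerProductSpace.toDual_symm_apply⟩
  obtain ⟨G, hG⟩ : ∃ G : M, ∀ μ : M, ⟪G, μ⟫ = g μ :=
    ⟨(InnerProductSpace.toDual ℝ M).symm g, fun μ => InnerProductSpace.toDual_symm_apply⟩
  -- solve for λ
  obtain ⟨lam, hlam⟩ := hSsurj (Ts (A.symm F) - G)
  have hlam' : Ts (A.symm (T lam)) = Ts (A.symm F) - G := hlam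
  set ψ : V := A.symm (F - T lam) with hψdef
  have hAψ : A ψ = F - T lam := A.apply_symm_apply _
  have heq1 : ∀ v : V, a ψ v + b v lam = f v := by
    intro v
    have h1 : a ψ v = ⟪A ψ, v⟫ := (hA ψ v).symm
    have h2 : b v lam = ⟪v, T lam⟫ := (hT v lam).symm
    rw [h1, h2, hAψ, inner_sub_left, real_inner_comm v (T lam), hF]
    ring
  have heq2 : ∀ μ : M, b ψ μ = g μ := by
    intro μ
    have hTsψ : Ts ψ = G := by
      have h : Ts ψ = Ts (A.symm F) - Ts (A.symm (T lam)) := by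
        rw [hψdef, map_sub, map_sub]
      rw [h, hlam']
      abel
    rw [← hTs' ψ μ, hTsψ, hG]
  refine ⟨(ψ, lam), ⟨heq1, heq2⟩, ?_⟩
  -- uniqueness
  rintro ⟨ψ', lam'⟩ ⟨hq1, hq2⟩
  have h1 : ∀ v : V, a (ψ' - ψ) v + b v (lam' - lam) = 0 := by
    intro v
    have e1 := hq1 v
    have e2 := heq1 v
    simp only [map_sub, LinearMap.sub_apply]
    linarith
  have h2 : ∀ μ : M, b (ψ' - ψ) μ = 0 := by
    intro μ
    have e1 := hq2 μ
    have e2 := heq2 μ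
    simp only [map_sub, LinearMap.sub_apply]
    linarith
  have hψ0 : ψ' - ψ = 0 := by
    have e1 := h1 (ψ' - ψ)
    have e2 := h2 (lam' - lam)
    have e3 : a (ψ' - ψ) (ψ' - ψ) = 0 := by linarith
    have e4 := hacoer (ψ' - ψ)
    rw [e3] at e4
    exact key _ e4
  have hlam0 : lam' - lam = 0 := by
    have hb0 : ∀ v : V, b v (lam' - lam) = 0 := by
      intro v
      have e1 := h1 v
      have e2 : a (ψ' - ψ) v = 0 := by rw [hψ0]; simp
      linarith
    have hT0 : T (lam' - lam) = 0 := by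
      have h : ⟪T (lam' - lam), T (lam' - lam)⟫ = 0 := by
        rw [hT]; exact hb0 _
      exact inner_self_eq_zero.mp h
    exact hTzero _ hT0
  have hψeq : ψ' = ψ := sub_eq_zero.mp hψ0
  have hlameq : lam' = lam := sub_eq_zero.mp hlam0
  simp [hψeq, hlameq]
end

section
/- Let (ψ_j, λ_j) ∈ V × M, j = 1,…,J, solve the saddle point problems a(ψ_j, v) + b(v, λ_j) = 0 for all v ∈ V and b(ψ_j, μ) = ⟨μ, e_j⟩ for all μ ∈ M, where (e_j) is an orthonormal basis of the J-dimensional space M. Then the functions ψ_1, …, ψ_J are linearly independent and span the a-orthogonal complement Ṽ of W = {w ∈ V : b(w,μ)=0 ∀μ ∈ M}. -/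
open scoped RealInnerProductSpace

/-- The saddle point solutions `ψ_j` associated with an orthonormal basis `(e_j)` of the
`J`-dimensional space `M` are linearly independent and span the a-orthogonal complement
`Ṽ` of `W = {w : b(w,μ) = 0 ∀μ}`. -/
theorem stmt_4 {V M : Type*} [NormedAddCommGroup V] [InnerProductSpace ℝ V] [CompleteSpace V]
    [NormedAddCommGroup M] [InnerProductSpace ℝ M] [FiniteDimensional ℝ M]
    (a : V →ₗ[ℝ] V →ₗ[ℝ] ℝ) (β : ℝ) (habdd : ∀ u v : V, |a u v| ≤ β * ‖u‖ * ‖v‖)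
    (hasymm : ∀ u v : V, a u v = a v u)
    (α : ℝ) (hα : 0 < α) (hacoer : ∀ v : V, α * ‖v‖ ^ 2 ≤ a v v)
    (b : V →ₗ[ℝ] M →ₗ[ℝ] ℝ) (Cb : ℝ) (hbbdd : ∀ (v : V) (μ : M), |b v μ| ≤ Cb * ‖v‖ * ‖μ‖)
    (γ : ℝ) (hγ : 0 < γ)
    (hinfsup : ∀ μ : M, γ * ‖μ‖ ≤ sSup {r : ℝ | ∃ v : V, v ≠ 0 ∧ r = b v μ / ‖v‖})
    (J : ℕ) (e : Fin J → M) (he : Orthonormal ℝ e)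
    (hspan : Submodule.span ℝ (Set.range e) = ⊤)
    (ψ : Fin J → V) (lam : Fin J → M)
    (hsolve1 : ∀ (j : Fin J) (v : V), a (ψ j) v + b v (lam j) = 0)
    (hsolve2 : ∀ (j : Fin J) (μ : M), b (ψ j) μ = ⟪μ, e j⟫) :
    LinearIndependent ℝ ψ ∧
      ∀ v : V, v ∈ Submodule.span ℝ (Set.range ψ) ↔
        ∀ w : V, (∀ μ : M, b w μ = 0) → a v w = 0 := by

  have hite := orthonormal_iff_ite.mp he
  have hψV : ∀ (j : Fin J) (w : V), (∀ μ : M, b w μ = 0) → a (ψ j) w = 0 := by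
    intro j w hw
    have h := hsolve1 j w
    rw [hw (lam j)] at h
    linarith
  have hbψ : ∀ (j k : Fin J), b (ψ j) (e k) = if k = j then (1:ℝ) else 0 := by
    intro j k
    rw [hsolve2 j (e k)]
    exact hite k j
  constructor
  · rw [Fintype.linearIndependent_iff]
    intro c hc k
    have h1 : (b (∑ i, c i • ψ i)) (e k) = 0 := by rw [hc]; simp
    rw [map_sum, LinearMap.sum_apply] at h1
    simp only [map_smul, LinearMap.smul_apply, hbψ, smul_eq_mul, mul_ite, mul_one, mul_zero,
      Finset.sum_ite_eq, Finset.mem_univ, if_true] at h1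
    exact h1
  · intro v
    constructor
    · intro hv w hw
      induction hv using Submodule.span_induction with
      | mem x hx => obtain ⟨j, rfl⟩ := hx; exact hψV j w hw
      | zero => simp
      | add x y _ _ hx hy => simp [map_add, hx, hy]
      | smul r x _ hx => simp [map_smul, hx]
    · intro hv
      set c : Fin J → ℝ := fun j => b v (e j) with hcdef
      set u : V := v - ∑ j, c j • ψ j with hu
      have hbsum : ∀ k : Fin J, (b (∑ j, c j • ψ j)) (e k) = c k := by
        intro k
        rw [map_sum, LinearMap.sum_apply]
        simp only [map_smul, LinearMap.smul_apply, hbψ, smul_eq_mul, mul_ite, mul_one, mul_zero,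
          Finset.sum_ite_eq, Finset.mem_univ, if_true]
      have huW : ∀ μ : M, b u μ = 0 := by
        have hext : b u = 0 := by
          apply LinearMap.ext_on hspan
          rintro x ⟨k, rfl⟩
          simp only [hu, map_sub, LinearMap.sub_apply, hbsum k, LinearMap.zero_apply]
          simp [c]
        intro μ; rw [hext]; rfl
      have huV : ∀ w : V, (∀ μ : M, b w μ = 0) → a u w = 0 := by
        intro w hw
        simp only [hu, map_sub, LinearMap.sub_apply, map_sum, LinearMap.sum_apply]
        rw [hv w hw]
        simp only [map_smul, LinearMap.smul_apply, smul_eq_mul]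
        rw [Finset.sum_eq_zero]
        · ring
        · intro j _
          rw [hψV j w hw]; ring
      have hu0 : u = 0 := by
        have h1 : a u u = 0 := huV u huW
        have h2 := hacoer u
        rw [h1] at h2
        have : ‖u‖ = 0 := by
          by_contra h
          have hn : 0 < ‖u‖ := lt_of_le_of_ne (norm_nonneg u) (Ne.symm h)
          nlinarith [mul_pos hα (pow_pos hn 2)]
        exact norm_eq_zero.mp this
      have : v = ∑ j, c j • ψ j := by
        have := hu0
        rw [hu, sub_eq_zero] at this
        exact this
      rw [this]
      exact Submodule.sum_mem _ fun j _ => Submodule.smul_mem _ _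
        (Submodule.subset_span ⟨j, rfl⟩)
end

section
/- With the basis {ψ_j} of Ṽ as above, the a-orthogonal projection R : V → Ṽ admits the representation R v = Σ_{j=1}^J q_j(v) ψ_j, where q_j(v) := b(v, e_j). -/
open scoped RealInnerProductSpace

/-- With the basis `ψ_j` of `Ṽ` from the saddle point problems, the a-orthogonal
projection `R : V → Ṽ` admits the representation `R v = Σ_j q_j(v) ψ_j` with
`q_j(v) = b(v, e_j)`. -/
theorem stmt_5 {V M : Type*} [NormedAddCommGroup V] [InnerProductSpace ℝ V] [CompleteSpace V]
    [NormedAddCommGroup M] [InnerProductSpace ℝ M] [FiniteDimensional ℝ M]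
    (a : V →ₗ[ℝ] V →ₗ[ℝ] ℝ) (β : ℝ) (habdd : ∀ u v : V, |a u v| ≤ β * ‖u‖ * ‖v‖)
    (hasymm : ∀ u v : V, a u v = a v u)
    (α : ℝ) (hα : 0 < α) (hacoer : ∀ v : V, α * ‖v‖ ^ 2 ≤ a v v)
    (b : V →ₗ[ℝ] M →ₗ[ℝ] ℝ) (Cb : ℝ) (hbbdd : ∀ (v : V) (μ : M), |b v μ| ≤ Cb * ‖v‖ * ‖μ‖)
    (γ : ℝ) (hγ : 0 < γ)
    (hinfsup : ∀ μ : M, γ * ‖μ‖ ≤ sSup {r : ℝ | ∃ v : V, v ≠ 0 ∧ r = b v μ / ‖v‖})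
    (J : ℕ) (e : Fin J → M) (he : Orthonormal ℝ e)
    (hspan : Submodule.span ℝ (Set.range e) = ⊤)
    (ψ : Fin J → V) (lam : Fin J → M)
    (hsolve1 : ∀ (j : Fin J) (v : V), a (ψ j) v + b v (lam j) = 0)
    (hsolve2 : ∀ (j : Fin J) (μ : M), b (ψ j) μ = ⟪μ, e j⟫)
    (R : V → V)
    -- `R v` belongs to the a-orthogonal complement `Ṽ` of `W = {w : b(w,·) = 0}`
    (hRmem : ∀ v w : V, (∀ μ : M, b w μ = 0) → a (R v) w = 0)
    -- `v - R v` is a-orthogonal to `Ṽ`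
    (hRproj : ∀ v vt : V, (∀ w : V, (∀ μ : M, b w μ = 0) → a vt w = 0) →
      a (v - R v) vt = 0) :
    ∀ v : V, R v = ∑ j : Fin J, b v (e j) • ψ j := by
  intro v
  set S : V := ∑ j : Fin J, b v (e j) • ψ j with hSdef
  -- each ψ j is a-orthogonal to W
  have hψ : ∀ (j : Fin J) (w : V), (∀ μ : M, b w μ = 0) → a (ψ j) w = 0 := by
    intro j w hw
    have h1 := hsolve1 j w
    rw [hw (lam j)] at h1
    linarith
  -- d := R v - S is a-orthogonal to W
  have hdW : ∀ w : V, (∀ μ : M, b w μ = 0) → a (R v - S) w = 0 := by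
    intro w hw
    have hS0 : a S w = 0 := by
      rw [hSdef, map_sum, LinearMap.sum_apply]
      refine Finset.sum_eq_zero fun j _ => ?_
      rw [map_smul, LinearMap.smul_apply, hψ j w hw, smul_zero]
    rw [map_sub, LinearMap.sub_apply, hRmem v w hw, hS0, sub_zero]
  -- b S = b v
  have hbS : b S = b v := by
    apply LinearMap.ext_on hspan
    rintro _ ⟨i, rfl⟩
    rw [hSdef, map_sum, LinearMap.sum_apply]
    have : ∀ j : Fin J, (b (b v (e j) • ψ j)) (e i) = b v (e j) * ⟪e i, e j⟫ := by
      intro j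
      rw [map_smul, LinearMap.smul_apply, hsolve2 j (e i)]
      rfl
    simp_rw [this]
    have hij : ∀ j : Fin J, (⟪e i, e j⟫ : ℝ) = if i = j then 1 else 0 :=
      fun j => orthonormal_iff_ite.mp he i j
    simp_rw [hij]
    simp
  -- v - S ∈ W
  have hvS : ∀ μ : M, b (v - S) μ = 0 := by
    intro μ
    rw [map_sub, LinearMap.sub_apply, hbS, sub_self]
  -- a (R v - S) (R v - S) = 0
  have h1 : a (v - R v) (R v - S) = 0 := hRproj v (R v - S) hdW
  have h2 : a (R v - S) (v - S) = 0 := hdW (v - S) hvS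
  have h3 : a (R v - S) (R v - S) = 0 := by
    have : (R v - S) = -(v - R v) + (v - S) := by abel
    calc a (R v - S) (R v - S) = a (R v - S) (-(v - R v) + (v - S)) := by rw [← this]
      _ = -(a (R v - S) (v - R v)) + a (R v - S) (v - S) := by
          rw [map_add, map_neg]
      _ = -(a (v - R v) (R v - S)) + a (R v - S) (v - S) := by rw [hasymm]
      _ = 0 := by rw [h1, h2]; ring
  have h4 : α * ‖R v - S‖ ^ 2 ≤ 0 := h3 ▸ hacoer (R v - S)
  have h5 : R v - S = 0 := by
    by_contra h
    have hx : 0 < ‖R v - S‖ := norm_pos_iff.mpr h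
    nlinarith [mul_pos hα (pow_pos hx 2)]
  exact sub_eq_zero.mp h5
end
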